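/- Define the flowshop scheduling recursions: forward scheduling sets $s_{\mu,i}=\max(t_{\mu,i-1},t_{\mu-1,i})$ and $t_{\mu,i}=s_{\mu,i}+x_{\mu,i}$; backward scheduling sets $t_{\mu,i}=\min(s_{\mu,i+1},s_{\mu+1,i})$ and $s_{\mu,i}=t_{\mu,i}-x_{\mu,i}$. With $M$ machines, $N$ jobs, processing time matrix $X\in\mathbb{R}^{M\times N}$, and fiducial machine $\nu$, let $T(\nu)=t_{M,N}(\nu)-s_{1,1}(\nu)$ be the resulting makespan. Let $X'$ denote the matrix obtained by reversing the order of both machines and jobs: $x'_{\mu,i}=x_{M+1-\mu,N+1-i}$. Then the makespan of $X$ with fiducial machine $\nu$ equals the makespan of $X'$ with fiducial machine $M+1-\nu$; consequently, if the entries of $X$ are i.i.d., then $\mathbb{E}_X[T(\nu)]=\mathbb{E}_X[T(M+1-\nu)]$. -/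

import Mathlib

open MeasureTheory ProbabilityTheory

/-- `Sched M N ν x s t` says that `s, t` are the starting/terminate times produced
by the flowshop scheduling algorithm with `M` machines, `N` jobs, processing-time
matrix `x` (indices `1..M`, `1..N`), and fiducial machine `ν`: the fiducial row is
processed back to back starting at time `0`, machines after `ν` are scheduled
forward (`s = max` of predecessors, `t = s + x`), and machines before `ν` are
scheduled backward (`t = min` of successors, `s = t - x`). -/
def Sched (M N ν : ℕ) (x s t : ℕ → ℕ → ℝ) : Prop :=
  s ν 1 = 0 ∧
  (∀ i, 1 ≤ i → i ≤ N → t ν i = s ν i + x ν i) ∧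
  (∀ i, 1 ≤ i → i < N → s ν (i + 1) = t ν i) ∧
  (∀ μ, ν < μ → μ ≤ M →
    (s μ 1 = t (μ - 1) 1 ∧
      ∀ i, 2 ≤ i → i ≤ N → s μ i = max (t μ (i - 1)) (t (μ - 1) i)) ∧
    (∀ i, 1 ≤ i → i ≤ N → t μ i = s μ i + x μ i)) ∧
  (∀ μ, 1 ≤ μ → μ < ν →
    (t μ N = s (μ + 1) N ∧
      ∀ i, 1 ≤ i → i < N → t μ i = min (s μ (i + 1)) (s (μ + 1) i)) ∧
    (∀ i, 1 ≤ i → i ≤ N → s μ i = t μ i - x μ i))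

/-! The time reversal `τ ↦ T - τ`, with `T` the completion time of the fiducial row, turns a
schedule of `x` with fiducial machine `ν` into a schedule of the doubly reversed matrix with
fiducial machine `M + 1 - ν`: it exchanges start and completion times, forward and backward
scheduling, and `max` and `min`. The recursions determine a schedule uniquely on the box
`[1, M] × [1, N]`, so the two makespans coincide. For the expectations, the makespan is a
measurable function of the matrix (computed by the explicit recursions), and reindexing an
i.i.d. family along an injection does not change its joint law. -/

open Set

lemma ProbabilityTheory.iIndepFun.integral_precomp_eq {ι Ω 𝓧 E : Type*} [MeasurableSpace Ω]
    [MeasurableSpace 𝓧] [NormedAddCommGroup E] [NormedSpace ℝ E] {P : Measure Ω}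
    [IsProbabilityMeasure P] {X : ι → Ω → 𝓧} {law : Measure 𝓧} (hindep : iIndepFun X P)
    (hmeas : ∀ i, Measurable (X i)) (hident : ∀ i, P.map (X i) = law) {σ : ι → ι}
    (hσ : σ.Injective) {F : (ι → 𝓧) → E} (hF : StronglyMeasurable F) :
    ∫ ω, F (fun i => X (σ i) ω) ∂P = ∫ ω, F (fun i => X i ω) ∂P := by
  have hlaw : P.map (fun ω i => X (σ i) ω) = P.map (fun ω i => X i ω) := by
    rw [(hindep.precomp hσ).map_fun_eq_infinitePi_map (fun i => hmeas (σ i)),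
      hindep.map_fun_eq_infinitePi_map hmeas]
    simp only [hident]
  rw [← integral_map (measurable_pi_lambda _ fun i => hmeas (σ i)).aemeasurable
    hF.aestronglyMeasurable, hlaw,
    integral_map (measurable_pi_lambda _ hmeas).aemeasurable hF.aestronglyMeasurable]

namespace Sched

variable {M N ν : ℕ} {x s t s' t' : ℕ → ℕ → ℝ}

theorem finish_eq (h : Sched M N ν x s t) {μ i : ℕ} (hμ : 1 ≤ μ) (hμM : μ ≤ M) (hi : 1 ≤ i)
    (hiN : i ≤ N) : t μ i = s μ i + x μ i := by
  obtain ⟨-, hfid, -, hfwd, hbwd⟩ := h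
  rcases lt_trichotomy μ ν with hμν | rfl | hνμ
  · rw [(hbwd μ hμ hμν).2 i hi hiN]; ring
  · exact hfid i hi hiN
  · exact (hfwd μ hνμ hμM).2 i hi hiN

theorem eqOn_finish (h : Sched M N ν x s t) (h' : Sched M N ν x s' t') {μ : ℕ} (hμ : 1 ≤ μ)
    (hμM : μ ≤ M) (hs : EqOn (s μ) (s' μ) (Icc 1 N)) : EqOn (t μ) (t' μ) (Icc 1 N) :=
  fun i hi => by rw [h.finish_eq hμ hμM hi.1 hi.2, h'.finish_eq hμ hμM hi.1 hi.2, hs hi]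

theorem eqOn_start_fiducial (h : Sched M N ν x s t) (h' : Sched M N ν x s' t') :
    EqOn (s ν) (s' ν) (Icc 1 N) := by
  rintro i ⟨hi, hiN⟩
  induction i, hi using Nat.le_induction with
  | base => rw [h.1, h'.1]
  | succ i hi ih =>
    have hiN' : i ≤ N := by omega
    rw [h.2.2.1 i hi hiN, h'.2.2.1 i hi hiN, h.2.1 i hi hiN', h'.2.1 i hi hiN', ih hiN']

theorem eqOn_start_of_forward (h : Sched M N ν x s t) (h' : Sched M N ν x s' t') {μ : ℕ}
    (hνμ : ν < μ) (hμM : μ ≤ M) (hprev : EqOn (t (μ - 1)) (t' (μ - 1)) (Icc 1 N)) :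
    EqOn (s μ) (s' μ) (Icc 1 N) := by
  obtain ⟨⟨hfirst, hstep⟩, hfin⟩ := h.2.2.2.1 μ hνμ hμM
  obtain ⟨⟨hfirst', hstep'⟩, hfin'⟩ := h'.2.2.2.1 μ hνμ hμM
  rintro i ⟨hi, hiN⟩
  induction i, hi using Nat.le_induction with
  | base => rw [hfirst, hfirst', hprev ⟨le_rfl, hiN⟩]
  | succ i hi ih =>
    rw [hstep (i + 1) (by omega) hiN, hstep' (i + 1) (by omega) hiN, Nat.add_sub_cancel,
      hfin i hi (by omega), hfin' i hi (by omega), ih (by omega), hprev ⟨by omega, hiN⟩]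

theorem eqOn_start_of_backward (h : Sched M N ν x s t) (h' : Sched M N ν x s' t') {μ : ℕ}
    (hμ : 1 ≤ μ) (hμν : μ < ν) (hnext : EqOn (s (μ + 1)) (s' (μ + 1)) (Icc 1 N)) :
    EqOn (s μ) (s' μ) (Icc 1 N) := by
  obtain ⟨⟨hlast, hstep⟩, hstart⟩ := h.2.2.2.2 μ hμ hμν
  obtain ⟨⟨hlast', hstep'⟩, hstart'⟩ := h'.2.2.2.2 μ hμ hμν
  rintro i ⟨hi, hiN⟩
  induction hiN using Nat.decreasingInduction with
  | self => rw [hstart N hi le_rfl, hstart' N hi le_rfl, hlast, hlast', hnext ⟨hi, le_rfl⟩]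
  | of_succ i hiN ih =>
    rw [hstart i hi hiN.le, hstart' i hi hiN.le, hstep i hi hiN, hstep' i hi hiN,
      ih (by omega), hnext ⟨hi, hiN.le⟩]

theorem eqOn_start (h : Sched M N ν x s t) (h' : Sched M N ν x s' t') (hν₁ : 1 ≤ ν)
    (hν₂ : ν ≤ M) {μ : ℕ} (hμ : 1 ≤ μ) (hμM : μ ≤ M) : EqOn (s μ) (s' μ) (Icc 1 N) := by
  obtain hνμ | hμν := le_total ν μ
  · induction μ, hνμ using Nat.le_induction with
    | base => exact h.eqOn_start_fiducial h'
    | succ μ hνμ ih =>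
      refine h.eqOn_start_of_forward h' (by omega) hμM ?_
      simpa using h.eqOn_finish h' (by omega) (by omega) (ih (by omega) (by omega))
  · induction hμν using Nat.decreasingInduction with
    | self => exact h.eqOn_start_fiducial h'
    | of_succ μ hμν ih => exact h.eqOn_start_of_backward h' hμ hμν (ih (by omega) (by omega))

theorem makespan_eq (h : Sched M N ν x s t) (h' : Sched M N ν x s' t') (hN : 1 ≤ N)
    (hν₁ : 1 ≤ ν) (hν₂ : ν ≤ M) : t M N - s 1 1 = t' M N - s' 1 1 := by
  have hM : 1 ≤ M := hν₁.trans hν₂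
  have hs {μ : ℕ} (hμ : 1 ≤ μ) (hμM : μ ≤ M) := h.eqOn_start h' hν₁ hν₂ hμ hμM
  rw [h.eqOn_finish h' hM le_rfl (hs hM le_rfl) ⟨hN, le_rfl⟩, hs le_rfl hM ⟨le_rfl, hN⟩]

theorem congr {y : ℕ → ℕ → ℝ} (h : Sched M N ν x s t) (hν₁ : 1 ≤ ν) (hν₂ : ν ≤ M)
    (hxy : ∀ μ i, 1 ≤ μ → μ ≤ M → 1 ≤ i → i ≤ N → x μ i = y μ i) : Sched M N ν y s t := by
  obtain ⟨hs, hfid, hnext, hfwd, hbwd⟩ := h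
  refine ⟨hs, fun i hi hiN => ?_, hnext, fun μ hνμ hμM => ⟨(hfwd μ hνμ hμM).1, fun i hi hiN => ?_⟩,
    fun μ hμ hμν => ⟨(hbwd μ hμ hμν).1, fun i hi hiN => ?_⟩⟩
  · rw [hfid i hi hiN, hxy ν i hν₁ hν₂ hi hiN]
  · rw [(hfwd μ hνμ hμM).2 i hi hiN, hxy μ i (by omega) hμM hi hiN]
  · rw [(hbwd μ hμ hμν).2 i hi hiN, hxy μ i hμ (by omega) hi hiN]

theorem reverse (h : Sched M N ν x s t) (hν₁ : 1 ≤ ν) (hν₂ : ν ≤ M) :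
    Sched M N (M + 1 - ν) (fun μ i => x (M + 1 - μ) (N + 1 - i))
      (fun μ i => t ν N - t (M + 1 - μ) (N + 1 - i))
      (fun μ i => t ν N - s (M + 1 - μ) (N + 1 - i)) := by
  obtain ⟨hs, hfid, hnext, hfwd, hbwd⟩ := h
  have hνν : M + 1 - (M + 1 - ν) = ν := by omega
  refine ⟨?_, fun i hi hiN => ?_, fun i hi hiN => ?_, fun μ hνμ hμM => ?_, fun μ hμ hμν => ?_⟩
  · simp [hνν]
  · simp only [hνν, hfid (N + 1 - i) (by omega) (by omega)]
    ring
  · simp only [hνν, show N + 1 - i = N - i + 1 by omega, show N + 1 - (i + 1) = N - i by omega,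
      hnext (N - i) (by omega) (by omega)]
  · obtain ⟨⟨hlast, hstep⟩, hstart⟩ := hbwd (M + 1 - μ) (by omega) (by omega)
    refine ⟨⟨?_, fun i hi hiN => ?_⟩, fun i hi hiN => ?_⟩
    · simp only [show M + 1 - (μ - 1) = M + 1 - μ + 1 by omega, Nat.add_sub_cancel, hlast]
    · simp only [show M + 1 - (μ - 1) = M + 1 - μ + 1 by omega,
        show N + 1 - (i - 1) = N + 1 - i + 1 by omega, hstep (N + 1 - i) (by omega) (by omega)]
      exact sub_inf _ _ _
    · simp only [hstart (N + 1 - i) (by omega) (by omega)]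
      ring
  · obtain ⟨⟨hfirst, hstep⟩, hfin⟩ := hfwd (M + 1 - μ) (by omega) (by omega)
    refine ⟨⟨?_, fun i hi hiN => ?_⟩, fun i hi hiN => ?_⟩
    · simp only [show M + 1 - (μ + 1) = M + 1 - μ - 1 by omega, Nat.add_sub_cancel_left, hfirst]
    · simp only [show M + 1 - (μ + 1) = M + 1 - μ - 1 by omega,
        show N + 1 - (i + 1) = N + 1 - i - 1 by omega, hstep (N + 1 - i) (by omega) (by omega)]
      exact sub_sup _ _ _
    · simp only [hfin (N + 1 - i) (by omega) (by omega)]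
      ring

theorem makespan_eq_of_reverse (h : Sched M N ν x s t)
    (h' : Sched M N (M + 1 - ν) (fun μ i => x (M + 1 - μ) (N + 1 - i)) s' t') (hN : 1 ≤ N)
    (hν₁ : 1 ≤ ν) (hν₂ : ν ≤ M) : t M N - s 1 1 = t' M N - s' 1 1 := by
  have := (h.reverse hν₁ hν₂).makespan_eq h' hN (by omega) (by omega)
  simp only [Nat.add_sub_cancel_left, Nat.add_sub_cancel] at this
  linarith

end Sched

namespace Flowshop

noncomputable section

def prefixSum (r : ℕ → ℝ) (i : ℕ) : ℝ := ∑ j ∈ Finset.range i, r (j + 1)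

/-- Completion times of a forward-scheduled row behind a row with completion times `prev`;
the sentinel value at `0` makes job `1` start at `prev 1`. -/
def forwardRow (r prev : ℕ → ℝ) : ℕ → ℝ
  | 0 => prev 1
  | i + 1 => max (forwardRow r prev i) (prev (i + 1)) + r (i + 1)

/-- Start times of a backward-scheduled row ahead of a row with start times `next`;
the sentinel value at `N + 1` makes job `N` end at `next N`. -/
def backwardRow (N : ℕ) (r next : ℕ → ℝ) (i : ℕ) : ℝ :=
  if N < i then next N else min (backwardRow N r next (i + 1)) (next i) - r i
termination_by N + 1 - i

def forwardTimes (x : ℕ → ℕ → ℝ) (ν : ℕ) : ℕ → ℕ → ℝ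
  | 0 => prefixSum (x ν)
  | μ + 1 => if μ < ν then prefixSum (x ν) else forwardRow (x (μ + 1)) (forwardTimes x ν μ)

def backwardStarts (x : ℕ → ℕ → ℝ) (N ν μ : ℕ) : ℕ → ℝ :=
  if ν ≤ μ then fun i => prefixSum (x ν) i - x ν i
  else backwardRow N (x μ) (backwardStarts x N ν (μ + 1))
termination_by ν - μ

def scheduleStart (x : ℕ → ℕ → ℝ) (N ν μ i : ℕ) : ℝ :=
  if μ < ν then backwardStarts x N ν μ i else forwardTimes x ν μ i - x μ i

def scheduleFinish (x : ℕ → ℕ → ℝ) (N ν μ i : ℕ) : ℝ :=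
  scheduleStart x N ν μ i + x μ i

def makespan (M N ν : ℕ) (x : ℕ → ℕ → ℝ) : ℝ :=
  scheduleFinish x N ν M N - scheduleStart x N ν 1 1

end

section Construction

variable {x : ℕ → ℕ → ℝ} {N ν μ : ℕ}

lemma prefixSum_succ (r : ℕ → ℝ) (i : ℕ) : prefixSum r (i + 1) = prefixSum r i + r (i + 1) :=
  Finset.sum_range_succ _ _

lemma backwardRow_of_le {r next : ℕ → ℝ} {i : ℕ} (hi : i ≤ N) :
    backwardRow N r next i = min (backwardRow N r next (i + 1)) (next i) - r i := by
  rw [backwardRow, if_neg (by omega)]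

lemma backwardRow_of_lt {r next : ℕ → ℝ} {i : ℕ} (hi : N < i) :
    backwardRow N r next i = next N := by
  rw [backwardRow, if_pos hi]

lemma forwardTimes_of_le (h : μ ≤ ν) : forwardTimes x ν μ = prefixSum (x ν) := by
  cases μ with
  | zero => rfl
  | succ μ => simp only [forwardTimes, if_pos (show μ < ν by omega)]

lemma forwardTimes_of_lt (h : ν < μ) :
    forwardTimes x ν μ = forwardRow (x μ) (forwardTimes x ν (μ - 1)) := by
  obtain ⟨μ, rfl⟩ : ∃ k, μ = k + 1 := ⟨μ - 1, by omega⟩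
  simp only [forwardTimes, if_neg (show ¬ μ < ν by omega), Nat.add_sub_cancel]

lemma backwardStarts_of_le (h : ν ≤ μ) :
    backwardStarts x N ν μ = fun i => prefixSum (x ν) i - x ν i := by
  rw [backwardStarts, if_pos h]

lemma backwardStarts_of_lt (h : μ < ν) :
    backwardStarts x N ν μ = backwardRow N (x μ) (backwardStarts x N ν (μ + 1)) := by
  rw [backwardStarts, if_neg (by omega)]

lemma scheduleStart_of_le (h : μ ≤ ν) : scheduleStart x N ν μ = backwardStarts x N ν μ := by
  ext i
  unfold scheduleStart
  split_ifs with hμ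
  · rfl
  · rw [backwardStarts_of_le (by omega), forwardTimes_of_le h, show μ = ν by omega]

lemma scheduleFinish_of_le (h : ν ≤ μ) : scheduleFinish x N ν μ = forwardTimes x ν μ := by
  ext i
  simp [scheduleFinish, scheduleStart, show ¬ μ < ν by omega]

theorem sched_schedule (M N ν : ℕ) (x : ℕ → ℕ → ℝ) :
    Sched M N ν x (scheduleStart x N ν) (scheduleFinish x N ν) := by
  refine ⟨?_, fun i _ _ => rfl, fun i _ _ => ?_, fun μ hνμ _ => ⟨⟨?_, fun i hi _ => ?_⟩,
    fun i _ _ => rfl⟩, fun μ _ hμν => ⟨⟨?_, fun i hi hiN => ?_⟩, fun i _ _ => by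
      simp [scheduleFinish]⟩⟩
  · simp [scheduleStart, forwardTimes_of_le le_rfl, prefixSum]
  · simp only [scheduleFinish, scheduleStart, lt_irrefl, if_false, forwardTimes_of_le le_rfl,
      prefixSum_succ]
    ring
  · rw [scheduleFinish_of_le (by omega), scheduleStart, if_neg (by omega),
      forwardTimes_of_lt hνμ]
    simp [forwardRow]
  · obtain ⟨i, rfl⟩ : ∃ k, i = k + 1 := ⟨i - 1, by omega⟩
    rw [scheduleFinish_of_le (by omega), scheduleFinish_of_le (by omega), scheduleStart,
      if_neg (by omega), forwardTimes_of_lt hνμ]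
    simp [forwardRow]
  · rw [scheduleFinish, scheduleStart_of_le hμν.le, scheduleStart_of_le hμν,
      backwardStarts_of_lt hμν, backwardRow_of_le le_rfl, backwardRow_of_lt N.lt_succ_self]
    simp
  · rw [scheduleFinish, scheduleStart_of_le hμν.le, scheduleStart_of_le hμν,
      backwardStarts_of_lt hμν, backwardRow_of_le hiN.le]
    simp

end Construction

section Measurability

@[fun_prop]
lemma measurable_prefixSum : Measurable fun r : ℕ → ℝ => prefixSum r :=
  measurable_pi_lambda _ fun _ => Finset.measurable_sum _ fun _ _ => measurable_pi_apply _

variable {α : Type*} [MeasurableSpace α] {f g : α → ℕ → ℝ}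

lemma Measurable.forwardRow (hf : Measurable f) (hg : Measurable g) :
    Measurable fun a => forwardRow (f a) (g a) := by
  refine measurable_pi_lambda _ fun i => ?_
  induction i with
  | zero => exact hg.eval
  | succ i ih => exact (ih.max hg.eval).add hf.eval

lemma Measurable.backwardRow (N : ℕ) (hf : Measurable f) (hg : Measurable g) :
    Measurable fun a => backwardRow N (f a) (g a) := by
  refine measurable_pi_lambda _ fun i => ?_
  induction h : N + 1 - i generalizing i with
  | zero => rw [funext fun a => backwardRow_of_lt (by omega)]; exact hg.eval
  | succ k ih =>
    rw [funext fun a => backwardRow_of_le (by omega)]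
    exact ((ih (i + 1) (by omega)).min hg.eval).sub hf.eval

@[fun_prop]
lemma measurable_forwardTimes (ν μ : ℕ) : Measurable fun x => forwardTimes x ν μ := by
  induction μ with
  | zero => exact measurable_prefixSum.comp (measurable_pi_apply ν)
  | succ μ ih =>
    by_cases h : μ < ν
    · rw [funext fun x => forwardTimes_of_le (x := x) h]
      exact measurable_prefixSum.comp (measurable_pi_apply ν)
    · rw [funext fun x => forwardTimes_of_lt (x := x) (by omega)]
      exact Measurable.forwardRow (measurable_pi_apply _) ih

@[fun_prop]
lemma measurable_backwardStarts (N ν μ : ℕ) : Measurable fun x => backwardStarts x N ν μ := by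
  induction h : ν - μ generalizing μ with
  | zero =>
    rw [funext fun x => backwardStarts_of_le (x := x) (N := N) (by omega)]
    fun_prop
  | succ k ih =>
    rw [funext fun x => backwardStarts_of_lt (x := x) (N := N) (by omega)]
    exact Measurable.backwardRow N (measurable_pi_apply _) (ih (μ + 1) (by omega))

lemma measurable_makespan (M N ν : ℕ) : Measurable (makespan M N ν) := by
  unfold makespan scheduleFinish scheduleStart
  split_ifs <;> fun_prop

end Measurability

lemma makespan_eq_of_reverse {M N ν : ℕ} (hN : 1 ≤ N) (hν₁ : 1 ≤ ν) (hν₂ : ν ≤ M)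
    (x y : ℕ → ℕ → ℝ)
    (hy : ∀ μ i, 1 ≤ μ → μ ≤ M → 1 ≤ i → i ≤ N → x (M + 1 - μ) (N + 1 - i) = y μ i) :
    makespan M N ν x = makespan M N (M + 1 - ν) y :=
  (sched_schedule M N ν x).makespan_eq_of_reverse
    ((sched_schedule M N (M + 1 - ν) y).congr (by omega) (by omega) fun μ i h₁ h₂ h₃ h₄ =>
      (hy μ i h₁ h₂ h₃ h₄).symm) hN hν₁ hν₂

def boxReflect (M N : ℕ) (p : ℕ × ℕ) : ℕ × ℕ :=
  if 1 ≤ p.1 ∧ p.1 ≤ M ∧ 1 ≤ p.2 ∧ p.2 ≤ N then (M + 1 - p.1, N + 1 - p.2) else p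

lemma boxReflect_involutive (M N : ℕ) : Function.Involutive (boxReflect M N) := by
  intro p
  unfold boxReflect
  split_ifs <;> ext <;> simp <;> omega

end Flowshop

open Flowshop

theorem makespan_reversal_symmetry_general {Ω : Type*} [MeasureSpace Ω]
    [IsProbabilityMeasure (ℙ : Measure Ω)]
    (M N : ℕ) (hN : 1 ≤ N) (ν : ℕ) (hν₁ : 1 ≤ ν) (hν₂ : ν ≤ M)
    (X : ℕ → ℕ → Ω → ℝ) (hmeas : ∀ μ i, Measurable (X μ i))
    (hident : ∀ μ i, Measure.map (X μ i) ℙ = Measure.map (X 1 1) ℙ)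
    (hindep : iIndepFun (fun p : ℕ × ℕ => X p.1 p.2) ℙ)
    (mk : (ℕ → ℕ → ℝ) → ℕ → ℝ)
    (hmk : ∀ (x s t : ℕ → ℕ → ℝ) (μ : ℕ), 1 ≤ μ → μ ≤ M →
      Sched M N μ x s t → mk x μ = t M N - s 1 1) :
    (∀ (x s t s' t' : ℕ → ℕ → ℝ),
      Sched M N ν x s t →
      Sched M N (M + 1 - ν) (fun μ i => x (M + 1 - μ) (N + 1 - i)) s' t' →
      t M N - s 1 1 = t' M N - s' 1 1) ∧
    ∫ ω, mk (fun a b => X a b ω) ν = ∫ ω, mk (fun a b => X a b ω) (M + 1 - ν) := by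
  refine ⟨fun x s t s' t' h h' => h.makespan_eq_of_reverse h' hN hν₁ hν₂, ?_⟩
  have hmk' (x : ℕ → ℕ → ℝ) {μ : ℕ} (hμ : 1 ≤ μ) (hμM : μ ≤ M) : mk x μ = makespan M N μ x :=
    hmk _ _ _ μ hμ hμM (sched_schedule M N μ x)
  let F (y : ℕ × ℕ → ℝ) : ℝ := makespan M N (M + 1 - ν) fun a b => y (a, b)
  have hF : Measurable F := (measurable_makespan M N (M + 1 - ν)).comp (by fun_prop)
  let σ := boxReflect M N
  calc ∫ ω, mk (fun a b => X a b ω) ν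
      = ∫ ω, F (fun p => X (σ p).1 (σ p).2 ω) := by
        refine integral_congr_ae (ae_of_all _ fun ω => ?_)
        dsimp only
        rw [hmk' _ hν₁ hν₂]
        refine makespan_eq_of_reverse hN hν₁ hν₂ _ _ fun μ i h₁ h₂ h₃ h₄ => ?_
        simp [σ, boxReflect, h₁, h₂, h₃, h₄]
    _ = ∫ ω, F (fun p => X p.1 p.2 ω) :=
        hindep.integral_precomp_eq (fun p => hmeas p.1 p.2) (fun p => hident p.1 p.2)
          (boxReflect_involutive M N).injective hF.stronglyMeasurable
    _ = ∫ ω, mk (fun a b => X a b ω) (M + 1 - ν) :=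
        integral_congr_ae (ae_of_all _ fun ω => (hmk' _ (by omega) (by omega)).symm)

/-- Time-reversal symmetry of the flowshop makespan: the makespan of `x` with
fiducial machine `ν` equals the makespan of the doubly reversed matrix
`x'_{μ,i} = x_{M+1-μ,N+1-i}` with fiducial machine `M+1-ν`; consequently, for a
matrix with i.i.d. entries, `E[T(ν)] = E[T(M+1-ν)]`. -/
theorem makespan_reversal_symmetry {Ω : Type*} [MeasureSpace Ω]
    [IsProbabilityMeasure (ℙ : Measure Ω)]
    (M N : ℕ) (hM : 1 ≤ M) (hN : 1 ≤ N) (ν : ℕ) (hν₁ : 1 ≤ ν) (hν₂ : ν ≤ M)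
    (X : ℕ → ℕ → Ω → ℝ) (hmeas : ∀ μ i, Measurable (X μ i))
    (hident : ∀ μ i, Measure.map (X μ i) ℙ = Measure.map (X 1 1) ℙ)
    (hindep : iIndepFun (fun p : ℕ × ℕ => X p.1 p.2) ℙ)
    (mk : (ℕ → ℕ → ℝ) → ℕ → ℝ)
    (hmk : ∀ (x s t : ℕ → ℕ → ℝ) (μ : ℕ), 1 ≤ μ → μ ≤ M →
      Sched M N μ x s t → mk x μ = t M N - s 1 1)
    (hint : ∀ μ, Integrable (fun ω => mk (fun a b => X a b ω) μ) ℙ) :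
    (∀ (x s t s' t' : ℕ → ℕ → ℝ),
      Sched M N ν x s t →
      Sched M N (M + 1 - ν) (fun μ i => x (M + 1 - μ) (N + 1 - i)) s' t' →
      t M N - s 1 1 = t' M N - s' 1 1) ∧
    ∫ ω, mk (fun a b => X a b ω) ν = ∫ ω, mk (fun a b => X a b ω) (M + 1 - ν) :=
  makespan_reversal_symmetry_general M N hN ν hν₁ hν₂ X hmeas hident hindep mk hmk
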